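/- arXiv:2101.01420 — 2 statements merged into one kernel-verified Lean document; each statement's English description precedes it below -/
import Mathlib

section
/- Let q1, q2, q3 be nonzero complex numbers with q1·q2·q3 = 1 and 0 < |q1| < 1, let n, m be integers, and let v, w be nonzero complex numbers such that δ := q1^{m−n}·w/v satisfies |δ| < 1, |q1·q2·δ| < 1 and |q1·q3·δ| < 1. Then all the series below converge absolutely and exp( Σ_{r=1}^∞ (1/r)·(q3·δ)^r·q1^r·(1 − q2^r)/(1 − q1^r) ) = R_{nm}(v/w) · exp( Σ_{r=1}^∞ (1/r)·δ^r·q1^r·(1 − q2^r)/(1 − q1^r) ). Equivalently, the vacuum two-point function A_{nm}(v,w) := 𝐀_{nm}(v/w) of vector intertwiners satisfies the two-point quantum KZ relation A_{nm}(𝔮^{−2}·v, w) = R_{nm}(v/w)·A_{nm}(v, w), where 𝔮² = q3. -/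
open Complex

private lemma den_ne (q1 : ℂ) (h1 : ‖q1‖ < 1) (r : ℕ) :
    1 - q1 ^ (r + 1) ≠ 0 := by
  intro h
  have hq : q1 ^ (r + 1) = 1 := by linear_combination -h
  have : ‖q1‖ ^ (r + 1) = 1 := by
    rw [← norm_pow, hq, norm_one]
  have hle : ‖q1‖ ^ (r + 1) ≤ ‖q1‖ ^ 1 :=
    pow_le_pow_of_le_one (norm_nonneg q1) h1.le (by omega)
  simp at hle
  rw [this] at hle
  linarith

private lemma den_lb (q1 : ℂ) (h1 : ‖q1‖ < 1) (r : ℕ) :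
    1 - ‖q1‖ ≤ ‖1 - q1 ^ (r + 1)‖ := by
  have htri : ‖(1 : ℂ)‖ ≤ ‖1 - q1 ^ (r + 1)‖ + ‖q1 ^ (r + 1)‖ := by
    simpa using norm_add_le (1 - q1 ^ (r + 1)) (q1 ^ (r + 1))
  have hpw : ‖q1 ^ (r + 1)‖ ≤ ‖q1‖ := by
    rw [norm_pow]
    calc ‖q1‖ ^ (r + 1) ≤ ‖q1‖ ^ 1 :=
          pow_le_pow_of_le_one (norm_nonneg q1) h1.le (by omega)
      _ = ‖q1‖ := pow_one _
  simp only [norm_one] at htri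
  linarith

private lemma summable_aux (q1 q2 x : ℂ) (h1 : ‖q1‖ < 1)
    (hx : ‖q1 * x‖ < 1) (hx2 : ‖q1 * q2 * x‖ < 1) :
    Summable (fun r : ℕ => ‖(1 / ((r : ℂ) + 1)) * x ^ (r + 1) * q1 ^ (r + 1) *
      (1 - q2 ^ (r + 1)) / (1 - q1 ^ (r + 1))‖) := by
  set a := ‖q1 * x‖ with ha
  set b := ‖q1 * q2 * x‖ with hb
  have hdpos : 0 < 1 - ‖q1‖ := by linarith
  have hsum : Summable (fun r : ℕ => (a ^ (r + 1) + b ^ (r + 1)) / (1 - ‖q1‖)) := by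
    apply Summable.div_const
    apply Summable.add
    · have h := (summable_geometric_of_lt_one (norm_nonneg _) hx).mul_left a
      simp only [pow_succ, mul_comm]
      exact h
    · have h := (summable_geometric_of_lt_one (norm_nonneg _) hx2).mul_left b
      simp only [pow_succ, mul_comm]
      exact h
  apply Summable.of_nonneg_of_le (fun r => norm_nonneg _) _ hsum
  intro r
  rw [norm_div, norm_mul, norm_mul, norm_mul, norm_pow, norm_pow]
  have habsr : ‖(r : ℂ) + 1‖ = (r : ℝ) + 1 := by
    rw [show ((r : ℂ) + 1) = ((r + 1 : ℕ) : ℂ) by push_cast; ring, Complex.norm_natCast]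
    push_cast; ring
  have hfrac : ‖1 / ((r : ℂ) + 1)‖ ≤ 1 := by
    rw [norm_div, norm_one, habsr, div_le_one (by positivity)]
    linarith [Nat.cast_nonneg (α := ℝ) r]
  have hnum : ‖1 - q2 ^ (r + 1)‖ ≤ 1 + ‖q2‖ ^ (r + 1) := by
    calc ‖1 - q2 ^ (r + 1)‖ ≤ ‖(1 : ℂ)‖ + ‖q2 ^ (r + 1)‖ :=
          norm_sub_le _ _
      _ = 1 + ‖q2‖ ^ (r + 1) := by rw [norm_one, norm_pow]
  calc ‖1 / ((r : ℂ) + 1)‖ * ‖x‖ ^ (r + 1) * ‖q1‖ ^ (r + 1) *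
        ‖1 - q2 ^ (r + 1)‖ / ‖1 - q1 ^ (r + 1)‖
      ≤ 1 * ‖x‖ ^ (r + 1) * ‖q1‖ ^ (r + 1) *
        (1 + ‖q2‖ ^ (r + 1)) / (1 - ‖q1‖) := by
        apply div_le_div₀ (by positivity) ?_ hdpos (den_lb q1 h1 r)
        gcongr
    _ = (a ^ (r + 1) + b ^ (r + 1)) / (1 - ‖q1‖) := by
        rw [ha, hb, norm_mul, norm_mul, norm_mul]
        ring

/-- The summand of the series defining the diagonal R-matrix eigenvalue `R_{nm}(x)`. -/
noncomputable def rSummand (q1 q2 q3 : ℂ) (n m : ℤ) (x : ℂ) (r : ℕ) : ℂ :=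
  (1 / ((r : ℂ) + 1)) * ((q1 ^ (n - m) * x)⁻¹) ^ (r + 1) * q1 ^ (r + 1) *
    (1 - q2 ^ (r + 1)) * (1 - q3 ^ (r + 1)) / (1 - q1 ^ (r + 1))

/-- `R_{nm}(x) = exp( -Σ_{r≥1} (1/r)(q1^{n-m} x)^{-r} q1^r (1-q2^r)(1-q3^r)/(1-q1^r) )`. -/
noncomputable def rMat (q1 q2 q3 : ℂ) (n m : ℤ) (x : ℂ) : ℂ :=
  Complex.exp (- ∑' r : ℕ, rSummand q1 q2 q3 n m x r)

/-- the two-point quantum KZ relation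
`A_{nm}(𝔮^{-2} v, w) = R_{nm}(v/w) A_{nm}(v,w)` for the vacuum two-point function of vector
intertwiners, written out in terms of `δ = q1^{m-n} w/v`. -/
theorem vector_two_point_qKZ
    (q1 q2 q3 : ℂ) (hq1 : q1 ≠ 0) (hq2 : q2 ≠ 0) (hq3 : q3 ≠ 0)
    (hq : q1 * q2 * q3 = 1)
    (h0 : 0 < ‖q1‖) (h1 : ‖q1‖ < 1)
    (n m : ℤ) (v w : ℂ) (hv : v ≠ 0) (hw : w ≠ 0)
    (δ : ℂ) (hδ : δ = q1 ^ (m - n) * w / v)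
    (hd1 : ‖δ‖ < 1)
    (hd2 : ‖q1 * q2 * δ‖ < 1)
    (hd3 : ‖q1 * q3 * δ‖ < 1) :
    Summable (fun r : ℕ =>
      ‖(1 / ((r : ℂ) + 1)) * (q3 * δ) ^ (r + 1) * q1 ^ (r + 1) *
        (1 - q2 ^ (r + 1)) / (1 - q1 ^ (r + 1))‖) ∧
    Summable (fun r : ℕ =>
      ‖(1 / ((r : ℂ) + 1)) * δ ^ (r + 1) * q1 ^ (r + 1) *
        (1 - q2 ^ (r + 1)) / (1 - q1 ^ (r + 1))‖) ∧
    Summable (fun r : ℕ => ‖rSummand q1 q2 q3 n m (v / w) r‖) ∧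
    Complex.exp (∑' r : ℕ,
        (1 / ((r : ℂ) + 1)) * (q3 * δ) ^ (r + 1) * q1 ^ (r + 1) *
          (1 - q2 ^ (r + 1)) / (1 - q1 ^ (r + 1)))
      = rMat q1 q2 q3 n m (v / w) *
        Complex.exp (∑' r : ℕ,
          (1 / ((r : ℂ) + 1)) * δ ^ (r + 1) * q1 ^ (r + 1) *
            (1 - q2 ^ (r + 1)) / (1 - q1 ^ (r + 1))) := by
  -- summability of the first series (argument q3·δ)
  have hS1 : Summable (fun r : ℕ =>
      ‖(1 / ((r : ℂ) + 1)) * (q3 * δ) ^ (r + 1) * q1 ^ (r + 1) *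
        (1 - q2 ^ (r + 1)) / (1 - q1 ^ (r + 1))‖) := by
    apply summable_aux q1 q2 (q3 * δ) h1
    · have : q1 * (q3 * δ) = q1 * q3 * δ := by ring
      rw [this]; exact hd3
    · have : q1 * q2 * (q3 * δ) = (q1 * q2 * q3) * δ := by ring
      rw [this, hq, one_mul]; exact hd1
  -- summability of the second series (argument δ)
  have hS2 : Summable (fun r : ℕ =>
      ‖(1 / ((r : ℂ) + 1)) * δ ^ (r + 1) * q1 ^ (r + 1) *
        (1 - q2 ^ (r + 1)) / (1 - q1 ^ (r + 1))‖) := by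
    apply summable_aux q1 q2 δ h1
    · rw [norm_mul]
      nlinarith [norm_nonneg q1, norm_nonneg δ]
    · exact hd2
  -- key algebraic fact: the inverse appearing in rSummand equals δ
  have hz : q1 ^ (n - m) ≠ 0 := zpow_ne_zero _ hq1
  have hkey : (q1 ^ (n - m) * (v / w))⁻¹ = δ := by
    rw [hδ, show m - n = -(n - m) by ring, zpow_neg]
    field_simp
  -- pointwise identity: rSummand = (δ-term) - (q3·δ-term)
  have hpt : ∀ r : ℕ, rSummand q1 q2 q3 n m (v / w) r =
      (1 / ((r : ℂ) + 1)) * δ ^ (r + 1) * q1 ^ (r + 1) *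
        (1 - q2 ^ (r + 1)) / (1 - q1 ^ (r + 1)) -
      (1 / ((r : ℂ) + 1)) * (q3 * δ) ^ (r + 1) * q1 ^ (r + 1) *
        (1 - q2 ^ (r + 1)) / (1 - q1 ^ (r + 1)) := by
    intro r
    have hden : 1 - q1 ^ (r + 1) ≠ 0 := den_ne q1 h1 r
    have hr : ((r : ℂ) + 1) ≠ 0 := Nat.cast_add_one_ne_zero r
    rw [rSummand, hkey]
    field_simp
    ring
  -- summability of rSummand norms
  have hS3 : Summable (fun r : ℕ => ‖rSummand q1 q2 q3 n m (v / w) r‖) := by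
    apply Summable.of_nonneg_of_le (fun r => norm_nonneg _) _ (hS2.add hS1)
    intro r
    rw [hpt r]
    exact norm_sub_le _ _
  refine ⟨hS1, hS2, hS3, ?_⟩
  -- complex summability
  have hA1 : Summable (fun r : ℕ =>
      (1 / ((r : ℂ) + 1)) * (q3 * δ) ^ (r + 1) * q1 ^ (r + 1) *
        (1 - q2 ^ (r + 1)) / (1 - q1 ^ (r + 1))) := .of_norm hS1
  have hA2 : Summable (fun r : ℕ =>
      (1 / ((r : ℂ) + 1)) * δ ^ (r + 1) * q1 ^ (r + 1) *
        (1 - q2 ^ (r + 1)) / (1 - q1 ^ (r + 1))) := .of_norm hS2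
  have hT : (∑' r : ℕ, rSummand q1 q2 q3 n m (v / w) r) =
      (∑' r : ℕ, (1 / ((r : ℂ) + 1)) * δ ^ (r + 1) * q1 ^ (r + 1) *
        (1 - q2 ^ (r + 1)) / (1 - q1 ^ (r + 1))) -
      (∑' r : ℕ, (1 / ((r : ℂ) + 1)) * (q3 * δ) ^ (r + 1) * q1 ^ (r + 1) *
        (1 - q2 ^ (r + 1)) / (1 - q1 ^ (r + 1))) := by
    rw [← Summable.tsum_sub hA2 hA1]
    exact tsum_congr hpt
  rw [rMat, hT, ← Complex.exp_add]
  congr 1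
  ring
end

section
/- Let q1, q2, q3 be nonzero complex numbers with q1·q2·q3 = 1, let 𝔮 be nonzero with 𝔮² = q3, fix integers λ_1,…,λ_n and μ_1,…,μ_m, nonzero complex numbers z_1,…,z_n and w_1,…,w_m, and an index 1 ≤ k ≤ n. Define G := ( ∏_{1≤i<j≤n} 𝐀_{λ_i λ_j}(z_i/z_j) · ∏_{1≤l<i≤m} 𝐀_{μ_l μ_i}(w_l/(𝔮²·w_i)) ) / ( ∏_{j=1}^m ∏_{l=1}^n 𝐀_{μ_j λ_l}(𝔮·w_j/(𝔮²·z_l)) ), and let G′ be the same expression with z_k replaced by 𝔮^{−2}·z_k. Assume every series occurring in the 𝐀-factors of G and G′ and in the R-factors below converges absolutely. Then G′ = A_k · G, where A_k := ∏_{j=1}^m R_{μ_j λ_k}(𝔮·w_j/z_k) · ∏_{j=1}^{k−1} R_{λ_j λ_k}(𝔮²·z_j/z_k)^{−1} · ∏_{j=k+1}^n R_{λ_k λ_j}(z_k/z_j). (This says the factorized correlation function of vector intertwiners of the Ding–Iohara–Miki algebra solves the generalized quantum KZ equation in the variable z_k, with shift parameter p = 𝔮^{−2}.) -/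
open Complex

set_option maxHeartbeats 2000000


/-- The summand of the series defining the vacuum two-point function `𝐀_{nm}(x)` of vector
intertwiners (index `r ≥ 1` is `r+1` here). -/
noncomputable def aSummand (q1 q2 : ℂ) (n m : ℤ) (x : ℂ) (r : ℕ) : ℂ :=
  (1 / ((r : ℂ) + 1)) * ((q1 ^ (n - m) * x)⁻¹) ^ (r + 1) * q1 ^ (r + 1) *
    (1 - q2 ^ (r + 1)) / (1 - q1 ^ (r + 1))

/-- `𝐀_{nm}(x) = exp( Σ_{r≥1} (1/r)(q1^{n-m} x)^{-r} q1^r (1-q2^r)/(1-q1^r) )`. -/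
noncomputable def aMat (q1 q2 : ℂ) (n m : ℤ) (x : ℂ) : ℂ :=
  Complex.exp (∑' r : ℕ, aSummand q1 q2 n m x r)

/-- The factorized correlation function of vector intertwiners:
`G = (∏_{i<j} 𝐀_{λ_i λ_j}(z_i/z_j) · ∏_{l<i} 𝐀_{μ_l μ_i}(w_l/(𝔮² w_i))) /
(∏_j ∏_l 𝐀_{μ_j λ_l}(𝔮 w_j/(𝔮² z_l)))`. -/
noncomputable def corrG (q1 q2 qq : ℂ) {n m : ℕ} (lam : Fin n → ℤ) (mu : Fin m → ℤ)
    (z : Fin n → ℂ) (w : Fin m → ℂ) : ℂ :=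
  ((∏ p ∈ Finset.univ.filter (fun p : Fin n × Fin n => p.1 < p.2),
      aMat q1 q2 (lam p.1) (lam p.2) (z p.1 / z p.2)) *
    (∏ p ∈ Finset.univ.filter (fun p : Fin m × Fin m => p.1 < p.2),
      aMat q1 q2 (mu p.1) (mu p.2) (w p.1 / (qq ^ 2 * w p.2)))) /
  (∏ j : Fin m, ∏ l : Fin n, aMat q1 q2 (mu j) (lam l) (qq * w j / (qq ^ 2 * z l)))

lemma rSummand_eq (q1 q2 q3 : ℂ) (n m : ℤ) (x : ℂ) (r : ℕ) :
    aSummand q1 q2 n m (q3⁻¹ * x) r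
      = aSummand q1 q2 n m x r - rSummand q1 q2 q3 n m x r := by
  unfold aSummand rSummand
  rw [div_sub_div_same]
  congr 1
  rw [show q1 ^ (n - m) * (q3⁻¹ * x) = q3⁻¹ * (q1 ^ (n - m) * x) by ring,
    mul_inv, inv_inv, mul_pow]
  ring

lemma aMat_shift (q1 q2 q3 : ℂ) (n m : ℤ) (x : ℂ)
    (ha : Summable fun r => aSummand q1 q2 n m x r)
    (ha' : Summable fun r => aSummand q1 q2 n m (q3⁻¹ * x) r) :
    aMat q1 q2 n m (q3⁻¹ * x) = rMat q1 q2 q3 n m x * aMat q1 q2 n m x := by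
  unfold aMat rMat
  rw [← Complex.exp_add]
  congr 1
  have h1 : ∑' r, rSummand q1 q2 q3 n m x r
      = (∑' r, aSummand q1 q2 n m x r) - ∑' r, aSummand q1 q2 n m (q3⁻¹ * x) r := by
    rw [← Summable.tsum_sub ha ha']
    exact tsum_congr fun r => by rw [rSummand_eq q1 q2 q3 n m x r]; ring
  rw [h1]; ring

lemma rMat_ne_zero (q1 q2 q3 : ℂ) (n m : ℤ) (x : ℂ) : rMat q1 q2 q3 n m x ≠ 0 :=
  Complex.exp_ne_zero _

lemma aMat_ne_zero (q1 q2 : ℂ) (n m : ℤ) (x : ℂ) : aMat q1 q2 n m x ≠ 0 :=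
  Complex.exp_ne_zero _

/-- the factorized correlation function of vector intertwiners solves the
generalized quantum KZ equation in the variable `z_k` with shift parameter `p = 𝔮^{-2}`. -/
theorem vector_qKZ_solution
    (q1 q2 q3 : ℂ) (hq1 : q1 ≠ 0) (hq2 : q2 ≠ 0) (hq3 : q3 ≠ 0)
    (hq : q1 * q2 * q3 = 1)
    (qq : ℂ) (hqq0 : qq ≠ 0) (hqq : qq ^ 2 = q3)
    {n m : ℕ} (lam : Fin n → ℤ) (mu : Fin m → ℤ)
    (z : Fin n → ℂ) (w : Fin m → ℂ)
    (hz : ∀ i, z i ≠ 0) (hw : ∀ j, w j ≠ 0)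
    (k : Fin n)
    (z' : Fin n → ℂ) (hz' : z' = Function.update z k (qq ^ (-2 : ℤ) * z k))
    (hA1 : ∀ i j : Fin n, i < j →
      Summable (fun r : ℕ => ‖aSummand q1 q2 (lam i) (lam j) (z i / z j) r‖))
    (hA1' : ∀ i j : Fin n, i < j →
      Summable (fun r : ℕ => ‖aSummand q1 q2 (lam i) (lam j) (z' i / z' j) r‖))
    (hA2 : ∀ l i : Fin m, l < i →
      Summable (fun r : ℕ => ‖aSummand q1 q2 (mu l) (mu i) (w l / (qq ^ 2 * w i)) r‖))
    (hA3 : ∀ j : Fin m, ∀ l : Fin n,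
      Summable (fun r : ℕ => ‖aSummand q1 q2 (mu j) (lam l) (qq * w j / (qq ^ 2 * z l)) r‖))
    (hA3' : ∀ j : Fin m, ∀ l : Fin n,
      Summable (fun r : ℕ => ‖aSummand q1 q2 (mu j) (lam l) (qq * w j / (qq ^ 2 * z' l)) r‖))
    (hR1 : ∀ j : Fin m,
      Summable (fun r : ℕ => ‖rSummand q1 q2 q3 (mu j) (lam k) (qq * w j / z k) r‖))
    (hR2 : ∀ j : Fin n, j < k →
      Summable (fun r : ℕ => ‖rSummand q1 q2 q3 (lam j) (lam k) (qq ^ 2 * z j / z k) r‖))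
    (hR3 : ∀ j : Fin n, k < j →
      Summable (fun r : ℕ => ‖rSummand q1 q2 q3 (lam k) (lam j) (z k / z j) r‖)) :
    corrG q1 q2 qq lam mu z' w
      = ((∏ j : Fin m, rMat q1 q2 q3 (mu j) (lam k) (qq * w j / z k)) *
          (∏ j ∈ Finset.univ.filter (fun j : Fin n => j < k),
            (rMat q1 q2 q3 (lam j) (lam k) (qq ^ 2 * z j / z k))⁻¹) *
          (∏ j ∈ Finset.univ.filter (fun j : Fin n => k < j),
            rMat q1 q2 q3 (lam k) (lam j) (z k / z j))) *
        corrG q1 q2 qq lam mu z w := by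
  have hz'k : z' k = q3⁻¹ * z k := by
    rw [hz', Function.update_self, ← hqq,
      show (-2 : ℤ) = -(2 : ℕ) by norm_num, zpow_neg, zpow_natCast]
  have hz'n : ∀ j : Fin n, j ≠ k → z' j = z j := fun j hj => by
    rw [hz', Function.update_of_ne hj]
  -- numerator z-part
  set S := Finset.univ.filter (fun p : Fin n × Fin n => p.1 < p.2) with hS
  have hfac : ∀ p ∈ S, aMat q1 q2 (lam p.1) (lam p.2) (z' p.1 / z' p.2)
      = ((if p.2 = k then (rMat q1 q2 q3 (lam p.1) (lam k) (q3 * z p.1 / z k))⁻¹ else 1) *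
         (if p.1 = k then rMat q1 q2 q3 (lam k) (lam p.2) (z k / z p.2) else 1)) *
        aMat q1 q2 (lam p.1) (lam p.2) (z p.1 / z p.2) := by
    intro p hp
    rw [hS, Finset.mem_filter] at hp
    obtain ⟨-, hp⟩ := hp
    by_cases h1 : p.1 = k
    · have h2 : p.2 ≠ k := fun h => absurd hp (by rw [h1, h]; exact lt_irrefl k)
      have e' : z' k / z' p.2 = q3⁻¹ * (z k / z p.2) := by
        rw [hz'n p.2 h2, hz'k, mul_div_assoc]
      have e : z' p.1 / z' p.2 = q3⁻¹ * (z k / z p.2) := by rw [h1]; exact e'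
      rw [if_neg h2, if_pos h1, one_mul, e, h1]
      have ha : Summable fun r => aSummand q1 q2 (lam k) (lam p.2) (z k / z p.2) r :=
        (hA1 k p.2 (h1 ▸ hp)).of_norm
      have ha' : Summable fun r => aSummand q1 q2 (lam k) (lam p.2) (q3⁻¹ * (z k / z p.2)) r := by
        have := (hA1' k p.2 (h1 ▸ hp)).of_norm
        rwa [e'] at this
      rw [aMat_shift q1 q2 q3 _ _ _ ha ha']
    · by_cases h2 : p.2 = k
      · have hpk : p.1 < k := h2 ▸ hp
        have e1' : z' p.1 / z' k = q3 * z p.1 / z k := by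
          rw [hz'n p.1 h1, hz'k, div_eq_mul_inv, mul_inv, inv_inv, div_eq_mul_inv]
          ring
        have e1 : z' p.1 / z' p.2 = q3 * z p.1 / z k := by rw [h2]; exact e1'
        have e2' : z p.1 / z k = q3⁻¹ * (q3 * z p.1 / z k) := by
          rw [mul_div_assoc, inv_mul_cancel_left₀ hq3]
        have e2 : z p.1 / z p.2 = q3⁻¹ * (q3 * z p.1 / z k) := by rw [h2]; exact e2'
        rw [if_pos h2, if_neg h1, mul_one, e1, e2, h2]
        have ha : Summable fun r =>
            aSummand q1 q2 (lam p.1) (lam k) (q3 * z p.1 / z k) r := by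
          have := (hA1' p.1 k hpk).of_norm
          rwa [e1'] at this
        have ha' : Summable fun r =>
            aSummand q1 q2 (lam p.1) (lam k) (q3⁻¹ * (q3 * z p.1 / z k)) r := by
          have := (hA1 p.1 k hpk).of_norm
          rwa [e2'] at this
        rw [aMat_shift q1 q2 q3 _ _ _ ha ha', inv_mul_cancel_left₀ (rMat_ne_zero _ _ _ _ _ _)]
      · rw [if_neg h1, if_neg h2, hz'n p.1 h1, hz'n p.2 h2, one_mul, one_mul]
  have hP1 : (∏ p ∈ S, aMat q1 q2 (lam p.1) (lam p.2) (z' p.1 / z' p.2))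
      = ((∏ j ∈ Finset.univ.filter (fun j : Fin n => j < k),
            (rMat q1 q2 q3 (lam j) (lam k) (q3 * z j / z k))⁻¹) *
         (∏ j ∈ Finset.univ.filter (fun j : Fin n => k < j),
            rMat q1 q2 q3 (lam k) (lam j) (z k / z j))) *
        ∏ p ∈ S, aMat q1 q2 (lam p.1) (lam p.2) (z p.1 / z p.2) := by
    rw [Finset.prod_congr rfl hfac, Finset.prod_mul_distrib, Finset.prod_mul_distrib]
    congr 2
    · rw [hS, Finset.prod_filter, Fintype.prod_prod_type]
      have inner : ∀ a : Fin n,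
          (∏ b : Fin n, if a < b then
              (if b = k then (rMat q1 q2 q3 (lam a) (lam k) (q3 * z a / z k))⁻¹ else 1) else 1)
          = if a ∈ Finset.univ.filter (fun j : Fin n => j < k) then
              (rMat q1 q2 q3 (lam a) (lam k) (q3 * z a / z k))⁻¹ else 1 := by
        intro a
        have : ∀ b : Fin n, (if a < b then
            (if b = k then (rMat q1 q2 q3 (lam a) (lam k) (q3 * z a / z k))⁻¹ else 1) else 1)
            = if b = k then
                (if a < k then (rMat q1 q2 q3 (lam a) (lam k) (q3 * z a / z k))⁻¹ else 1)
              else 1 := by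
          intro b
          by_cases hb : b = k
          · subst hb; simp
          · simp [hb]
        rw [Finset.prod_congr rfl (fun b _ => this b), Finset.prod_ite_eq' Finset.univ k]
        simp
      rw [Finset.prod_congr rfl (fun a _ => inner a), ← Finset.prod_filter]
      simp
    · rw [hS, Finset.prod_filter, Fintype.prod_prod_type]
      have inner : ∀ a : Fin n,
          (∏ b : Fin n, if a < b then
              (if a = k then rMat q1 q2 q3 (lam k) (lam b) (z k / z b) else 1) else 1)
          = if a = k then
              (∏ b ∈ Finset.univ.filter (fun j : Fin n => k < j),
                rMat q1 q2 q3 (lam k) (lam b) (z k / z b)) else 1 := by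
        intro a
        by_cases ha : a = k
        · subst ha
          rw [if_pos rfl, Finset.prod_filter]
          exact Finset.prod_congr rfl (fun b _ => by by_cases hb : a < b <;> simp [hb])
        · rw [if_neg ha]
          exact Finset.prod_eq_one (fun b _ => by simp [ha])
      rw [Finset.prod_congr rfl (fun a _ => inner a), Finset.prod_ite_eq' Finset.univ k]
      simp
  -- denominator
  have hP3 : (∏ j : Fin m, ∏ l : Fin n, aMat q1 q2 (mu j) (lam l) (qq * w j / (q3 * z' l)))
      = (∏ j : Fin m, rMat q1 q2 q3 (mu j) (lam k) (qq * w j / z k))⁻¹ *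
        ∏ j : Fin m, ∏ l : Fin n, aMat q1 q2 (mu j) (lam l) (qq * w j / (q3 * z l)) := by
    rw [← Finset.prod_inv_distrib, ← Finset.prod_mul_distrib]
    refine Finset.prod_congr rfl (fun j _ => ?_)
    have hfl : ∀ l : Fin n, aMat q1 q2 (mu j) (lam l) (qq * w j / (q3 * z' l))
        = (if l = k then (rMat q1 q2 q3 (mu j) (lam k) (qq * w j / z k))⁻¹ else 1) *
          aMat q1 q2 (mu j) (lam l) (qq * w j / (q3 * z l)) := by
      intro l
      by_cases hl : l = k
      · have e1 : qq * w j / (q3 * z' l) = qq * w j / z k := by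
          rw [hl, hz'k, mul_inv_cancel_left₀ hq3]
        have e2 : qq * w j / (q3 * z l) = q3⁻¹ * (qq * w j / z k) := by
          rw [hl, div_eq_mul_inv, mul_inv, div_eq_mul_inv]; ring
        rw [if_pos hl, e1, e2, hl]
        have ha : Summable fun r => aSummand q1 q2 (mu j) (lam k) (qq * w j / z k) r := by
          have := (hA3' j k).of_norm
          rwa [show qq * w j / (qq ^ 2 * z' k) = qq * w j / z k from by
            rw [hqq]; rw [show (q3 : ℂ) * z' k = z k from by rw [hz'k, mul_inv_cancel_left₀ hq3]]]
            at this
        have ha' : Summable fun r =>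
            aSummand q1 q2 (mu j) (lam k) (q3⁻¹ * (qq * w j / z k)) r := by
          have := (hA3 j k).of_norm
          rwa [show qq * w j / (qq ^ 2 * z k) = q3⁻¹ * (qq * w j / z k) from by
            rw [hqq, ← e2, hl]] at this
        rw [aMat_shift q1 q2 q3 _ _ _ ha ha', inv_mul_cancel_left₀ (rMat_ne_zero _ _ _ _ _ _)]
      · rw [if_neg hl, hz'n l hl, one_mul]
    rw [Finset.prod_congr rfl (fun l _ => hfl l), Finset.prod_mul_distrib,
      Finset.prod_ite_eq' Finset.univ k]
    simp
  -- assemble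
  simp only [corrG]
  rw [hqq]
  rw [hP1, hP3]
  have hR : (∏ j : Fin m, rMat q1 q2 q3 (mu j) (lam k) (qq * w j / z k)) ≠ 0 :=
    Finset.prod_ne_zero_iff.mpr fun j _ => rMat_ne_zero _ _ _ _ _ _
  have hP3ne : (∏ j : Fin m, ∏ l : Fin n,
      aMat q1 q2 (mu j) (lam l) (qq * w j / (q3 * z l))) ≠ 0 :=
    Finset.prod_ne_zero_iff.mpr fun j _ =>
      Finset.prod_ne_zero_iff.mpr fun l _ => aMat_ne_zero _ _ _ _ _
  field_simp
  ring
end
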